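/- Let F be holomorphic on a half-plane {Re(s) > σ₀} ⊂ ℂ and suppose there are holomorphic functions G_j on {Re(s) > σ₀ − δ} (for some δ > 0), a nonzero polynomial (or entire function) P, and a shift μ > 0 such that F(s) = (Σ_j G_j(s + μ))/P(s) whenever Re(s) > σ₀ and P(s) ≠ 0. If this functional recursion holds at every stage (with the G_j themselves expressible in terms of further shifts), then F extends to a meromorphic function on ℂ with poles only at points s where some iterated denominator P(s + kμ') vanishes. -/

import Mathlib

open Filter Topology Set

/-!
Iterating the recursion `m` times writes each `f ∈ 𝒜` on `{Re s > σ₀ - mμ}` as a finite sum of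
translates `g(s + mμ)`, `g ∈ 𝒜`, divided by `P(s) P(s + μ) ⋯ P(s + (m-1)μ)`: a meromorphic
function there, analytic where none of these factors vanishes. Two iterates agree wherever the
deeper one's denominators do not vanish, and since the zeros of the entire function `P ≢ 0` are
isolated, this holds on a punctured neighbourhood of every point. Using near `Re s = r` an
iterate deep enough to reach past that line therefore glues to a meromorphic continuation.
-/

theorem Differentiable.eventually_nhdsNE_ne_zero {f : ℂ → ℂ} (hf : Differentiable ℂ f)
    (hne : ∃ s, f s ≠ 0) (x : ℂ) : ∀ᶠ z in 𝓝[≠] x, f z ≠ 0 := by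
  refine (hf.analyticAt x).eventually_eq_zero_or_eventually_ne_zero.resolve_left fun h => ?_
  obtain ⟨s, hs⟩ := hne
  have hfa : AnalyticOnNhd ℂ f univ := fun z _ => hf.analyticAt z
  exact hs <| hfa.eqOn_zero_of_preconnected_of_eventuallyEq_zero isPreconnected_univ (mem_univ x) h
    (mem_univ s)

theorem Differentiable.eventually_nhdsNE_forall_le_ne_zero {f : ℂ → ℂ} (hf : Differentiable ℂ f)
    (hne : ∃ s, f s ≠ 0) (x c : ℂ) (m : ℕ) : ∀ᶠ z in 𝓝[≠] x, ∀ k ≤ m, f (z + k * c) ≠ 0 := by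
  obtain ⟨s, hs⟩ := hne
  refine (eventually_all_finite (finite_Iic m)).2 fun k _ => ?_
  exact (hf.comp (differentiable_id.add_const _)).eventually_nhdsNE_ne_zero
    ⟨s - k * c, by simpa using hs⟩ x

theorem sub_mul_lt_re_add_of_sub_succ_mul_lt {σ₀ μ : ℝ} {m : ℕ} {s : ℂ}
    (hs : σ₀ - (m + 1 : ℕ) * μ < s.re) : σ₀ - m * μ < (s + μ).re := by
  simp only [Complex.add_re, Complex.ofReal_re]
  push_cast at hs
  linarith

theorem forall_le_succ_shift {p : ℂ → Prop} {s c : ℂ} {m : ℕ}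
    (h : ∀ k ≤ m + 1, p (s + k * c)) : ∀ k ≤ m, p (s + c + k * c) := fun k hk => by
  simpa [add_mul, add_assoc, add_comm c] using h (k + 1) (by omega)

section ShiftRecursion

variable {ι : Type*} {n : ι → ℕ} {σ₀ μ : ℝ} {P : ℂ → ℂ} {u : ι → ℂ → ℂ}
  {g : (i : ι) → Fin (n i) → ι}

def ShiftRecursion (σ₀ μ : ℝ) (P : ℂ → ℂ) (u : ι → ℂ → ℂ) (g : (i : ι) → Fin (n i) → ι) : Prop :=
  ∀ i s, σ₀ < s.re → P s ≠ 0 → u i s = (∑ j, u (g i j) (s + μ)) / P s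

noncomputable def iterContinuation (P : ℂ → ℂ) (μ : ℝ) (u : ι → ℂ → ℂ)
    (g : (i : ι) → Fin (n i) → ι) : ℕ → ι → ℂ → ℂ
  | 0 => u
  | m + 1 => fun i s => (∑ j, iterContinuation P μ u g m (g i j) (s + μ)) / P s

theorem iterContinuation_succ_eq
    (hrec : ShiftRecursion σ₀ μ P u g)
    {m : ℕ} {i : ι} {s : ℂ} (hs : σ₀ - m * μ < s.re) (hP : ∀ k ≤ m, P (s + k * μ) ≠ 0) :
    iterContinuation P μ u g (m + 1) i s = iterContinuation P μ u g m i s := by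
  induction m generalizing i s with
  | zero =>
    simp only [iterContinuation]
    exact (hrec i s (by simpa using hs) (by simpa using hP 0 le_rfl)).symm
  | succ m ih =>
    simp only [iterContinuation] at ih ⊢
    congr 1
    refine Finset.sum_congr rfl fun j _ => ih (sub_mul_lt_re_add_of_sub_succ_mul_lt hs)
      (forall_le_succ_shift (p := (P · ≠ 0)) hP)

theorem iterContinuation_eq_of_le (hμ : 0 ≤ μ)
    (hrec : ShiftRecursion σ₀ μ P u g)
    {m₀ m : ℕ} (hle : m₀ ≤ m) {i : ι} {s : ℂ} (hs : σ₀ - m₀ * μ < s.re)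
    (hP : ∀ k ≤ m, P (s + k * μ) ≠ 0) :
    iterContinuation P μ u g m i s = iterContinuation P μ u g m₀ i s := by
  induction m, hle using Nat.le_induction with
  | base => rfl
  | succ m hm ih =>
    have hsm : σ₀ - m * μ < s.re := by
      have : (m₀ : ℝ) * μ ≤ m * μ := by gcongr
      linarith
    rw [iterContinuation_succ_eq hrec hsm fun k hk => hP k (by omega)]
    exact ih fun k hk => hP k (by omega)

theorem analyticAt_iterContinuation (hhol : ∀ i, DifferentiableOn ℂ (u i) {s | σ₀ < s.re})
    (hP : Differentiable ℂ P) {m : ℕ} {i : ι} {s : ℂ} (hs : σ₀ - m * μ < s.re)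
    (hPs : ∀ k ≤ m, P (s + k * μ) ≠ 0) : AnalyticAt ℂ (iterContinuation P μ u g m i) s := by
  induction m generalizing i s with
  | zero =>
    exact (hhol i).analyticAt
      ((isOpen_lt continuous_const Complex.continuous_re).mem_nhds (by simpa using hs))
  | succ m ih =>
    have hsum : AnalyticAt ℂ
        (fun z => ∑ j, iterContinuation P μ u g m (g i j) (z + μ)) s := by
      refine Finset.analyticAt_fun_sum _ fun j _ => ?_
      exact (ih (sub_mul_lt_re_add_of_sub_succ_mul_lt hs)
        (forall_le_succ_shift (p := (P · ≠ 0)) hPs)).comp_of_eq (by fun_prop) rfl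
    exact hsum.div (hP.analyticAt s) (by simpa using hPs 0 (Nat.zero_le _))

theorem meromorphicAt_iterContinuation (hhol : ∀ i, DifferentiableOn ℂ (u i) {s | σ₀ < s.re})
    (hP : Differentiable ℂ P) {m : ℕ} {i : ι} {s : ℂ} (hs : σ₀ - m * μ < s.re) :
    MeromorphicAt (iterContinuation P μ u g m i) s := by
  induction m generalizing i s with
  | zero =>
    exact ((hhol i).analyticAt ((isOpen_lt continuous_const Complex.continuous_re).mem_nhds
      (by simpa using hs))).meromorphicAt
  | succ m ih =>
    refine MeromorphicAt.div (MeromorphicAt.fun_sum fun j _ => ?_) (hP.analyticAt s).meromorphicAt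
    rw [meromorphicAt_fun_comp_add_const_iff_meromorphicAt]
    exact ih (sub_mul_lt_re_add_of_sub_succ_mul_lt hs)

noncomputable def continuationDepth (σ₀ μ r : ℝ) : ℕ := ⌊(σ₀ - r) / μ⌋₊ + 1

theorem sub_continuationDepth_mul_lt (hμ : 0 < μ) (r : ℝ) :
    σ₀ - continuationDepth σ₀ μ r * μ < r := by
  have h := (div_lt_iff₀ hμ).1 (Nat.lt_floor_add_one ((σ₀ - r) / μ))
  push_cast [continuationDepth]
  linarith

theorem continuationDepth_antitone (hμ : 0 ≤ μ) : Antitone (continuationDepth σ₀ μ) :=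
  fun _ _ h => Nat.add_le_add_right (Nat.floor_le_floor (by gcongr)) 1

noncomputable def continuation (P : ℂ → ℂ) (σ₀ μ : ℝ) (u : ι → ℂ → ℂ)
    (g : (i : ι) → Fin (n i) → ι) (i : ι) (s : ℂ) : ℂ :=
  iterContinuation P μ u g (continuationDepth σ₀ μ s.re) i s

theorem eventually_continuation_eq_iterContinuation (hμ : 0 < μ)
    (hrec : ShiftRecursion σ₀ μ P u g)
    (i : ι) (x : ℂ) :
    ∀ᶠ z in 𝓝 x, (∀ k ≤ continuationDepth σ₀ μ (x.re - 1), P (z + k * μ) ≠ 0) →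
      continuation P σ₀ μ u g i z =
        iterContinuation P μ u g (continuationDepth σ₀ μ (x.re - 1)) i z := by
  filter_upwards [Complex.continuous_re.continuousAt.eventually
    (eventually_gt_nhds (sub_one_lt x.re))] with z hz hPz
  exact (iterContinuation_eq_of_le hμ.le hrec (continuationDepth_antitone hμ.le hz.le)
    (sub_continuationDepth_mul_lt hμ z.re) hPz).symm

theorem continuation_eq (hμ : 0 < μ)
    (hrec : ShiftRecursion σ₀ μ P u g)
    {i : ι} {s : ℂ} (hs : σ₀ < s.re) (hPs : ∀ k : ℕ, P (s + k * μ) ≠ 0) :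
    continuation P σ₀ μ u g i s = u i s :=
  iterContinuation_eq_of_le hμ.le hrec (Nat.zero_le _) (by simpa using hs) fun k _ => hPs k

theorem meromorphicOn_continuation (hμ : 0 < μ)
    (hrec : ShiftRecursion σ₀ μ P u g)
    (hhol : ∀ i, DifferentiableOn ℂ (u i) {s | σ₀ < s.re})
    (hP : Differentiable ℂ P) (hPne : ∃ s, P s ≠ 0) (i : ι) :
    MeromorphicOn (continuation P σ₀ μ u g i) univ := fun x _ => by
  refine (meromorphicAt_iterContinuation (μ := μ) (g := g) (i := i)
    (m := continuationDepth σ₀ μ (x.re - 1)) hhol hP ?_).congr ?_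
  · linarith [sub_continuationDepth_mul_lt (σ₀ := σ₀) hμ (x.re - 1)]
  · filter_upwards [nhdsWithin_le_nhds (eventually_continuation_eq_iterContinuation hμ hrec i x),
      hP.eventually_nhdsNE_forall_le_ne_zero hPne x μ _] with z hz hPz
    exact (hz hPz).symm

theorem analyticAt_continuation (hμ : 0 < μ)
    (hrec : ShiftRecursion σ₀ μ P u g)
    (hhol : ∀ i, DifferentiableOn ℂ (u i) {s | σ₀ < s.re})
    (hP : Differentiable ℂ P) (hPne : ∃ s, P s ≠ 0) {i : ι} {s : ℂ}
    (hPs : ∀ k : ℕ, P (s + k * μ) ≠ 0) : AnalyticAt ℂ (continuation P σ₀ μ u g i) s := by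
  have hgood : ∀ᶠ z in 𝓝 s, ∀ k ≤ continuationDepth σ₀ μ (s.re - 1), P (z + k * μ) ≠ 0 := by
    rw [← nhdsNE_sup_pure, eventually_sup]
    exact ⟨hP.eventually_nhdsNE_forall_le_ne_zero hPne s μ _, fun k _ => hPs k⟩
  refine (analyticAt_iterContinuation (g := g) (i := i) (m := continuationDepth σ₀ μ (s.re - 1))
    hhol hP ?_ fun k _ => hPs k).congr ?_
  · linarith [sub_continuationDepth_mul_lt (σ₀ := σ₀) hμ (s.re - 1)]
  · filter_upwards [eventually_continuation_eq_iterContinuation hμ hrec i s, hgood] with z hz hPz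
    exact (hz hPz).symm

end ShiftRecursion

/-- Abstract meromorphic-continuation-by-recursion (shape of Theorem 2.7).
Let `𝒜` be a family of functions, each holomorphic on the half-plane
`{Re s > σ₀}`, containing `F`, let `P` be a nonzero entire function, and
`μ > 0` a shift, such that every `f ∈ 𝒜` satisfies the functional recursion
`f(s) = (Σ_j g_j(s + μ))/P(s)` with the `g_j` again in `𝒜`.  Then `F`
extends to a meromorphic function on `ℂ`, analytic away from the points `s`
where some iterated denominator `P(s + kμ)` vanishes. -/
theorem meromorphic_continuation_by_recursion
    (σ₀ : ℝ) (μ : ℝ) (hμ : 0 < μ)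
    (P : ℂ → ℂ) (hP : Differentiable ℂ P) (hPne : ∃ s, P s ≠ 0)
    (𝒜 : Set (ℂ → ℂ)) (F : ℂ → ℂ) (hF : F ∈ 𝒜)
    (hhol : ∀ f ∈ 𝒜, DifferentiableOn ℂ f {s : ℂ | σ₀ < s.re})
    (hrec : ∀ f ∈ 𝒜, ∃ (n : ℕ) (g : Fin n → (ℂ → ℂ)),
      (∀ j, g j ∈ 𝒜) ∧
      ∀ s : ℂ, σ₀ < s.re → P s ≠ 0 →
        f s = (∑ j, g j (s + (μ : ℂ))) / P s) :
    ∃ Ft : ℂ → ℂ,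
      MeromorphicOn Ft Set.univ ∧
      (∀ s : ℂ, σ₀ < s.re → (∀ k : ℕ, P (s + (k : ℂ) * (μ : ℂ)) ≠ 0) → Ft s = F s) ∧
      (∀ s : ℂ, (∀ k : ℕ, P (s + (k : ℂ) * (μ : ℂ)) ≠ 0) → AnalyticAt ℂ Ft s) := by
  choose n g hg hrecg using fun f : 𝒜 => hrec f f.2
  let g' : (f : 𝒜) → Fin (n f) → 𝒜 := fun f j => ⟨g f j, hg f j⟩
  have hrec' : ShiftRecursion σ₀ μ P Subtype.val g' := hrecg
  have hhol' : ∀ f : 𝒜, DifferentiableOn ℂ f.1 {s | σ₀ < s.re} := fun f => hhol f f.2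
  exact ⟨continuation P σ₀ μ Subtype.val g' ⟨F, hF⟩,
    meromorphicOn_continuation hμ hrec' hhol' hP hPne _,
    fun s hs hPs => continuation_eq hμ hrec' hs hPs,
    fun s hPs => analyticAt_continuation hμ hrec' hhol' hP hPne hPs⟩
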